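/- Let Z, Λ₁, Λ₁⁺ be n×n real matrices, X, Y, Λ₂, Λ₂⁺ be n×r real matrices, ρ > 0, ρ⁺ > 0, with Λ₁⁺ = Λ₁ + ρ(Z − XYᵀ) and Λ₂⁺ = Λ₂ + ρ(X − Y). Then L(Z,X,Y; Λ₁⁺, Λ₂⁺; ρ⁺) − L(Z,X,Y; Λ₁, Λ₂; ρ) = ((ρ⁺ + ρ)/(2ρ²))·(‖Λ₁⁺ − Λ₁‖_F² + ‖Λ₂⁺ − Λ₂‖_F²). -/

import Mathlib

open Matrix

/-- Squared Frobenius norm. -/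
def frobSq {n r : ℕ} (A : Matrix (Fin n) (Fin r) ℝ) : ℝ := ∑ i, ∑ j, (A i j) ^ 2

/-- Trace (Frobenius) inner product. -/
def minner {n r : ℕ} (A B : Matrix (Fin n) (Fin r) ℝ) : ℝ := ∑ i, ∑ j, A i j * B i j

/-- Matrix-form augmented Lagrangian
`L(Z,X,Y;Λ₁,Λ₂;ρ) = Tr(CZ) + ⟨Λ₁, Z−XYᵀ⟩ + (ρ/2)‖Z−XYᵀ‖_F² + ⟨Λ₂, X−Y⟩ + (ρ/2)‖X−Y‖_F²`. -/
noncomputable def mlagr {n r : ℕ} (C Z Λ1 : Matrix (Fin n) (Fin n) ℝ)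
    (X Y Λ2 : Matrix (Fin n) (Fin r) ℝ) (ρ : ℝ) : ℝ :=
  (C * Z).trace + minner Λ1 (Z - X * Yᵀ) + ρ / 2 * frobSq (Z - X * Yᵀ)
    + minner Λ2 (X - Y) + ρ / 2 * frobSq (X - Y)

section FrobeniusAlgebra

variable {n r : ℕ}

lemma minner_add_left (A B D : Matrix (Fin n) (Fin r) ℝ) :
    minner (A + B) D = minner A D + minner B D := by
  simp only [minner, Matrix.add_apply, add_mul, Finset.sum_add_distrib]

lemma minner_smul_left_self (c : ℝ) (A : Matrix (Fin n) (Fin r) ℝ) :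
    minner (c • A) A = c * frobSq A := by
  simp only [minner, frobSq, Matrix.smul_apply, smul_eq_mul, Finset.mul_sum, pow_two, mul_assoc]

lemma frobSq_smul (c : ℝ) (A : Matrix (Fin n) (Fin r) ℝ) :
    frobSq (c • A) = c ^ 2 * frobSq A := by
  simp only [frobSq, Matrix.smul_apply, smul_eq_mul, mul_pow, Finset.mul_sum]

lemma augmentedTerm_dual_update {ρ : ℝ} (hρ : ρ ≠ 0) (ρp : ℝ) (Λ R : Matrix (Fin n) (Fin r) ℝ) :
    (minner (Λ + ρ • R) R + ρp / 2 * frobSq R) - (minner Λ R + ρ / 2 * frobSq R)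
      = (ρp + ρ) / (2 * ρ ^ 2) * frobSq (ρ • R) := by
  rw [minner_add_left, minner_smul_left_self, frobSq_smul]
  field_simp
  ring

end FrobeniusAlgebra

theorem stmt15_general {n r : ℕ} (C Z Λ1 Λ1p : Matrix (Fin n) (Fin n) ℝ)
    (X Y Λ2 Λ2p : Matrix (Fin n) (Fin r) ℝ) (ρ ρp : ℝ)
    (hρ : 0 < ρ)
    (hΛ1 : Λ1p = Λ1 + ρ • (Z - X * Yᵀ))
    (hΛ2 : Λ2p = Λ2 + ρ • (X - Y)) :
    mlagr C Z Λ1p X Y Λ2p ρp - mlagr C Z Λ1 X Y Λ2 ρ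
      = (ρp + ρ) / (2 * ρ ^ 2) * (frobSq (Λ1p - Λ1) + frobSq (Λ2p - Λ2)) := by
  subst hΛ1 hΛ2
  have h1 := augmentedTerm_dual_update hρ.ne' ρp Λ1 (Z - X * Yᵀ)
  have h2 := augmentedTerm_dual_update hρ.ne' ρp Λ2 (X - Y)
  simp only [mlagr, add_sub_cancel_left]
  linear_combination h1 + h2

/-- with the dual updates `Λ₁⁺ = Λ₁ + ρ(Z − XYᵀ)` and `Λ₂⁺ = Λ₂ + ρ(X − Y)`,
`L(Z,X,Y;Λ₁⁺,Λ₂⁺;ρ⁺) − L(Z,X,Y;Λ₁,Λ₂;ρ) = ((ρ⁺+ρ)/(2ρ²))(‖Λ₁⁺−Λ₁‖_F² + ‖Λ₂⁺−Λ₂‖_F²)`. -/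
theorem stmt15 {n r : ℕ} (C Z Λ1 Λ1p : Matrix (Fin n) (Fin n) ℝ)
    (X Y Λ2 Λ2p : Matrix (Fin n) (Fin r) ℝ) (ρ ρp : ℝ)
    (hρ : 0 < ρ) (hρp : 0 < ρp)
    (hΛ1 : Λ1p = Λ1 + ρ • (Z - X * Yᵀ))
    (hΛ2 : Λ2p = Λ2 + ρ • (X - Y)) :
    mlagr C Z Λ1p X Y Λ2p ρp - mlagr C Z Λ1 X Y Λ2 ρ
      = (ρp + ρ) / (2 * ρ ^ 2) * (frobSq (Λ1p - Λ1) + frobSq (Λ2p - Λ2)) :=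
  stmt15_general C Z Λ1 Λ1p X Y Λ2 Λ2p ρ ρp hρ hΛ1 hΛ2
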